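/- arXiv:2406.10610 — 2 statements merged into one kernel-verified Lean document; each statement's English description precedes it below -/
import Mathlib

section
/- Under the string partition setup with words W'_i = S[Ω(i), PSA[i]-1] · #_i, let l = k+1 and m = n+l. Then the suffix array and document array of the collection W' satisfy: for 0 ≤ i < l, SA(W)[i] = |W'_i| - 1 and DA(W)[i] = i; and for l ≤ i < m, SA(W)[i] = position(SA(S)[i-l]) and DA(W)[i] = word(SA(S)[i-l]). -/
/-- Suffix of the extended string `S` (length `n`, sentinel `S n = 0`) starting at `i`,
as a list of characters. -/
def sfx (S : ℕ → ℕ) (n i : ℕ) : List ℕ :=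
  (List.range (n + 1 - i)).map (fun t => S (i + t))

/-- `S` is a string of length `n` over a positive alphabet with the unique smallest
sentinel `0` appended at position `n`. -/
def Sentinel (S : ℕ → ℕ) (n : ℕ) : Prop :=
  S n = 0 ∧ ∀ i < n, 0 < S i

/-- `SA` is the suffix array of `S` on positions `0..n`: a bijection of `{0,…,n}`
listing the suffixes in strictly increasing lexicographic order. -/
def IsSuffixArray (S : ℕ → ℕ) (n : ℕ) (SA : ℕ → ℕ) : Prop :=
  Set.BijOn SA (Set.Iic n) (Set.Iic n) ∧
  ∀ i j : ℕ, i ≤ n → j ≤ n → i < j →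
    List.Lex (· < ·) (sfx S n (SA i)) (sfx S n (SA j))

/-- `Ω(j) = max({-1} ∪ {t ∈ PSA : t ≤ PSA[j]-1})`, where `PSA = SA[0..k]`. -/
def Omega (SA : ℕ → ℕ) (k j : ℕ) : ℤ :=
  (insert (-1 : ℤ)
    (((Finset.range (k+1)).filter (fun t => SA t < SA j)).image
      (fun t => (SA t : ℤ)))).max' (Finset.insert_nonempty _ _)

/-- Character of `S` at an integer position: positions `-1` and `n` carry the
sentinel `0` (written `$`), characters of `Σ` are positive. -/
def Sc (S : ℕ → ℕ) (n : ℕ) (q : ℤ) : ℤ :=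
  if 0 ≤ q ∧ q < n then (S q.toNat : ℤ) else 0

/-- `BWT(S)[i] = S[SA[i]-1]` with `S[-1] = $`. -/
def bwtS (S : ℕ → ℕ) (n : ℕ) (SA : ℕ → ℕ) (i : ℕ) : ℤ :=
  Sc S n ((SA i : ℤ) - 1)

/-- The word `W_j = S[Ω(j) .. PSA[j]-1]` as a list of characters. -/
def wordList (S : ℕ → ℕ) (n : ℕ) (SA : ℕ → ℕ) (k j : ℕ) : List ℤ :=
  (List.range ((SA j : ℤ) - Omega SA k j).toNat).map
    (fun t => Sc S n (Omega SA k j + t))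

/-- The marked word `W'_j = W_j · #_j`, where the distinct markers are encoded as
`#_j = j - (k+1)`, so that `#_0 < … < #_k < $ = 0 < Σ`. -/
def wordM (S : ℕ → ℕ) (n : ℕ) (SA : ℕ → ℕ) (k j : ℕ) : List ℤ :=
  wordList S n SA k j ++ [(j : ℤ) - (k + 1)]

/-- A position `q ∈ {0,…,n}` of `S` viewed in `{-1,…,n-1}`: position `n` is
identified with `-1` (first right rotation). -/
def posZ (n q : ℕ) : ℤ := if q = n then -1 else (q : ℤ)

/-- `SAW`/`DAW` form the (suffix array, document array) pair for the collection
`Wc 0, …, Wc (l-1)`: the `i`-th lexicographically smallest of the `m` suffixes of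
the collection is `(Wc (DAW i)).drop (SAW i)`. -/
def IsMSA (Wc : ℕ → List ℤ) (l m : ℕ) (SAW DAW : ℕ → ℕ) : Prop :=
  (∀ i < m, DAW i < l ∧ SAW i < (Wc (DAW i)).length) ∧
  (∀ j < l, ∀ p < (Wc j).length, ∃! i, i < m ∧ DAW i = j ∧ SAW i = p) ∧
  ∀ i j : ℕ, i < m → j < m → i < j →
    List.Lex (· < ·) ((Wc (DAW i)).drop (SAW i)) ((Wc (DAW j)).drop (SAW j))

/-- Multi-string BWT: the character cyclically preceding the `i`-th smallest
suffix within its word. -/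
def bwtW (Wc : ℕ → List ℤ) (SAW DAW : ℕ → ℕ) (i : ℕ) : ℤ :=
  (Wc (DAW i)).getD ((SAW i + (Wc (DAW i)).length - 1) % (Wc (DAW i)).length) 0


/-!
Every position `a` of `S` (position `n` read as `-1`) lies in a word `W_j`, `j = word(a)`, and the
suffix of `W'_j` starting there is `S[a..PSA[j]-1] · #_j`. Two such suffixes compare like the
suffixes `S[a..]`, `S[b..]` of `S`: before the first mismatch they agree; if one word ends first,
its marker is smaller than any character; if both end together, the markers compare like the
ranks of `PSA[j_a]`, `PSA[j_b]`; and the word of the smaller suffix cannot end later, since the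
end of the other word would then be a `PSA` entry inside it. Hence the markers followed by the
suffixes of `S` in suffix-array order list the suffixes of `W'` strictly increasingly, and such a
listing of a finite set is unique.
-/

theorem eq_of_strictMonoOn_of_forall_exists {α : Type*} [LinearOrder α] {m : ℕ}
    {F G : ℕ → α} (hF : StrictMonoOn F (Set.Iio m)) (hG : StrictMonoOn G (Set.Iio m))
    (hFG : ∀ i < m, ∃ j < m, G j = F i) {i : ℕ} (hi : i < m) : G i = F i := by
  choose σ hσm hσ using hFG
  let τ : Fin m → Fin m := fun i => ⟨σ i i.2, hσm i i.2⟩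
  have hτ : StrictMono τ := fun i j hij => by
    have : G (σ i i.2) < G (σ j j.2) := by rw [hσ, hσ]; exact hF i.2 j.2 hij
    exact (hG.lt_iff_lt (hσm i i.2) (hσm j j.2)).1 this
  have hτi : σ i hi = i := congrArg Fin.val (hτ.apply_eq (x := ⟨i, hi⟩))
  simpa [hτi] using hσ i hi

theorem IsMSA.eq_of_strictMonoOn {Wc : ℕ → List ℤ} {l m : ℕ} {SAW DAW : ℕ → ℕ}
    (h : IsMSA Wc l m SAW DAW)
    (hinj : ∀ j j' p p', p < (Wc j).length → p' < (Wc j').length →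
      (Wc j).drop p = (Wc j').drop p' → j = j' ∧ p = p')
    {D P : ℕ → ℕ} (hDP : ∀ i < m, D i < l ∧ P i < (Wc (D i)).length)
    (hsorted : StrictMonoOn (fun i => (Wc (D i)).drop (P i)) (Set.Iio m))
    {i : ℕ} (hi : i < m) : DAW i = D i ∧ SAW i = P i := by
  obtain ⟨hvalid, hunique, hlt⟩ := h
  have hG : StrictMonoOn (fun i => (Wc (DAW i)).drop (SAW i)) (Set.Iio m) :=
    fun i hi j hj hij => hlt i j hi hj hij
  have hFG : ∀ i < m, ∃ j < m,
      (Wc (DAW j)).drop (SAW j) = (Wc (D i)).drop (P i) := by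
    intro i hi
    obtain ⟨j, ⟨hj, hDj, hPj⟩, -⟩ := hunique (D i) (hDP i hi).1 (P i) (hDP i hi).2
    exact ⟨j, hj, by rw [hDj, hPj]⟩
  exact hinj _ _ _ _ (hvalid i hi).2 (hDP i hi).2
    (eq_of_strictMonoOn_of_forall_exists hsorted hG hFG hi)

theorem sfx_length (S : ℕ → ℕ) (n a : ℕ) : (sfx S n a).length = n + 1 - a := by
  simp [sfx]

@[simp]
theorem getElem_sfx (S : ℕ → ℕ) (n a t : ℕ) (h : t < (sfx S n a).length) :
    (sfx S n a)[t] = S (a + t) := by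
  simp [sfx]

section Sentinel

variable {S : ℕ → ℕ} {n : ℕ}

theorem sfx_add_lt_sfx_add_of_mismatch {a b c L : ℕ} (hL : L ≤ c) (ha : a + c ≤ n)
    (hb : b + c ≤ n) (heq : ∀ t < c, S (a + t) = S (b + t)) (hlt : S (a + c) < S (b + c)) :
    sfx S n (a + L) < sfx S n (b + L) :=
  List.lt_iff_exists.2 <| .inr ⟨c - L, by rw [sfx_length]; omega, by rw [sfx_length]; omega,
    fun t ht => by simpa [Nat.add_assoc] using heq (L + t) (by omega),
    by simpa [Nat.add_assoc, Nat.add_sub_cancel' hL] using hlt⟩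

/-- The sentinel rules out that one suffix is a proper prefix of another. -/
theorem Sentinel.exists_mismatch_of_sfx_lt (hS : Sentinel S n) {a b : ℕ} (ha : a ≤ n)
    (h : sfx S n a < sfx S n b) :
    ∃ c, a + c ≤ n ∧ b + c ≤ n ∧ (∀ t < c, S (a + t) = S (b + t)) ∧
      S (a + c) < S (b + c) := by
  rcases List.lt_iff_exists.1 h with ⟨hpre, hlen⟩ | ⟨c, hca, hcb, heq, hlt⟩
  · simp only [sfx_length] at hlen
    have hna : n - a < (sfx S n a).length := by rw [sfx_length]; omega
    have hend := List.getElem_of_eq hpre hna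
    simp only [List.getElem_take, getElem_sfx, Nat.add_sub_cancel' ha, hS.1] at hend
    have := hS.2 (b + (n - a)) (by omega)
    omega
  · rw [sfx_length] at hca hcb
    exact ⟨c, by omega, by omega, fun t ht => by simpa using heq t ht, by simpa using hlt⟩

theorem Sentinel.not_sfx_lt_sfx_self (hS : Sentinel S n) {a : ℕ} (ha : a ≤ n) :
    ¬ sfx S n a < sfx S n n := by
  intro h
  obtain ⟨c, -, hc, -, hlt⟩ := hS.exists_mismatch_of_sfx_lt ha h
  obtain rfl : c = 0 := by omega
  simp only [Nat.add_zero, hS.1] at hlt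
  omega

end Sentinel

section SuffixArray

variable {S SA : ℕ → ℕ} {n : ℕ}

theorem IsSuffixArray.le (hSA : IsSuffixArray S n SA) {j : ℕ} (hj : j ≤ n) : SA j ≤ n :=
  hSA.1.1 hj

theorem IsSuffixArray.exists_eq (hSA : IsSuffixArray S n SA) {a : ℕ} (ha : a ≤ n) :
    ∃ r ≤ n, SA r = a :=
  hSA.1.2.2 ha

theorem IsSuffixArray.lt_of_sfx_lt (hSA : IsSuffixArray S n SA) {r j : ℕ} (hr : r ≤ n)
    (hj : j ≤ n) (h : sfx S n (SA r) < sfx S n (SA j)) : r < j := by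
  have hmono : StrictMonoOn (fun i => sfx S n (SA i)) (Set.Iic n) :=
    fun i hi j hj hij => hSA.2 i j hi hj hij
  exact (hmono.lt_iff_lt hr hj).1 h

theorem IsSuffixArray.apply_zero (hS : Sentinel S n) (hSA : IsSuffixArray S n SA) :
    SA 0 = n := by
  obtain ⟨r, hr, hrn⟩ := hSA.exists_eq le_rfl
  obtain rfl | hr0 := Nat.eq_zero_or_pos r
  · exact hrn
  · have h := hSA.2 0 r (Nat.zero_le n) hr hr0
    rw [hrn] at h
    exact absurd h (hS.not_sfx_lt_sfx_self (hSA.le (Nat.zero_le n)))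

end SuffixArray

section Omega

variable {SA : ℕ → ℕ} {k : ℕ}

theorem le_Omega {t j : ℕ} (ht : t ≤ k) (h : SA t < SA j) : (SA t : ℤ) ≤ Omega SA k j :=
  Finset.le_max' _ _ <| Finset.mem_insert_of_mem <| Finset.mem_image_of_mem (fun t => (SA t : ℤ))
    (Finset.mem_filter.2 ⟨Finset.mem_range.2 (Nat.lt_succ_of_le ht), h⟩)

theorem Omega_le {j : ℕ} {q : ℤ} (hq : -1 ≤ q)
    (h : ∀ t ≤ k, SA t < SA j → (SA t : ℤ) ≤ q) : Omega SA k j ≤ q := by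
  simp only [Omega, Finset.max'_le_iff, Finset.mem_insert, Finset.mem_image,
    Finset.mem_filter, Finset.mem_range]
  rintro b (rfl | ⟨t, ⟨ht, hlt⟩, rfl⟩)
  · exact hq
  · exact h t (by omega) hlt

end Omega

section Characters

variable {S : ℕ → ℕ} {n : ℕ}

theorem Sc_nonneg (q : ℤ) : 0 ≤ Sc S n q := by
  unfold Sc; split <;> omega

theorem Sc_natCast {a : ℕ} (ha : a < n) : Sc S n a = S a := by
  simp [Sc, ha]

@[simp]
theorem Sc_neg_one : Sc S n (-1) = 0 := by
  simp [Sc]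

@[simp]
theorem posZ_self (n : ℕ) : posZ n n = -1 := by
  simp [posZ]

theorem posZ_of_ne {a : ℕ} (ha : a ≠ n) : posZ n a = a := by
  simp [posZ, ha]

theorem posZ_lt {a : ℕ} (ha : a ≤ n) : posZ n a < n := by
  unfold posZ; split <;> omega

theorem neg_one_le_posZ (a : ℕ) : -1 ≤ posZ n a := by
  unfold posZ; split <;> omega

end Characters

section Words

variable {S SA : ℕ → ℕ} {n k : ℕ}

/-- `wordList` elaborates through the list monad, coercing `List.range _ : List ℕ` to
`List ℤ`; this is its plain `map` form. -/
theorem wordList_eq (j : ℕ) :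
    wordList S n SA k j = (List.range (SA j - Omega SA k j).toNat).map
      (fun t : ℕ => Sc S n (Omega SA k j + t)) := by
  simp only [wordList, List.pure_def, List.bind_eq_flatMap, List.map_flatMap,
    List.map_singleton]
  exact List.map_eq_flatMap.symm

theorem length_wordM (j : ℕ) :
    (wordM S n SA k j).length = (SA j - Omega SA k j).toNat + 1 := by
  simp [wordM, wordList_eq]

theorem drop_wordM_injective {j j' p p' : ℕ} (hp : p < (wordM S n SA k j).length)
    (hp' : p' < (wordM S n SA k j').length)
    (h : (wordM S n SA k j).drop p = (wordM S n SA k j').drop p') : j = j' ∧ p = p' := by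
  have hlast := congrArg List.getLast? h
  simp only [List.getLast?_drop, if_neg (Nat.not_le.2 hp), if_neg (Nat.not_le.2 hp')] at hlast
  simp only [wordM, List.getLast?_append, List.getLast?_singleton, Option.some_or,
    Option.some_inj, sub_left_inj, Nat.cast_inj] at hlast
  subst hlast
  have hlen := congrArg List.length h
  simp only [List.length_drop] at hlen
  exact ⟨rfl, by omega⟩

theorem length_drop_wordM {j : ℕ} {q : ℤ} (hq : Omega SA k j ≤ q) (hq' : q ≤ SA j) :
    ((wordM S n SA k j).drop (q - Omega SA k j).toNat).length = (SA j - q).toNat + 1 := by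
  rw [List.length_drop, length_wordM]
  omega

theorem getElem_drop_wordM {j : ℕ} {q : ℤ} (hq : Omega SA k j ≤ q) (hq' : q ≤ SA j)
    {t : ℕ} (ht : t < ((wordM S n SA k j).drop (q - Omega SA k j).toNat).length) :
    ((wordM S n SA k j).drop (q - Omega SA k j).toNat)[t] =
      if (t : ℤ) < SA j - q then Sc S n (q + t) else (j : ℤ) - (k + 1) := by
  have hlen : (wordList S n SA k j).length = (SA j - Omega SA k j).toNat := by
    simp [wordList_eq]
  rw [length_drop_wordM hq hq'] at ht
  simp only [List.getElem_drop, wordM, List.getElem_append, hlen]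
  split_ifs with h₁ h₂ h₂
  · simp only [wordList_eq, List.getElem_map, List.getElem_range]
    congr 1
    omega
  · omega
  · omega
  · simp

theorem getElem_drop_wordM_natCast {j a : ℕ} (hj : SA j ≤ n) (hwa : Omega SA k j ≤ a)
    (hwa' : a < SA j) {t : ℕ}
    (ht : t < ((wordM S n SA k j).drop ((a : ℤ) - Omega SA k j).toNat).length) :
    ((wordM S n SA k j).drop ((a : ℤ) - Omega SA k j).toNat)[t] =
      if t < SA j - a then (S (a + t) : ℤ) else (j : ℤ) - (k + 1) := by
  rw [getElem_drop_wordM hwa (by omega)]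
  split_ifs with h₁ h₂ h₂
  · rw [← Nat.cast_add, Sc_natCast (by omega)]
  · omega
  · omega
  · rfl

theorem drop_wordM_lt_of_mismatch (hSA : IsSuffixArray S n SA) (hk : k < n)
    {a b c ja jb : ℕ} (hja : ja ≤ k) (hjb : jb ≤ k)
    (hwa : Omega SA k ja ≤ a) (hwa' : a < SA ja) (hwb : Omega SA k jb ≤ b) (hwb' : b < SA jb)
    (hca : a + c ≤ n) (hcb : b + c ≤ n) (heq : ∀ t < c, S (a + t) = S (b + t))
    (hlt : S (a + c) < S (b + c)) :
    (wordM S n SA k ja).drop ((a : ℤ) - Omega SA k ja).toNat <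
      (wordM S n SA k jb).drop ((b : ℤ) - Omega SA k jb).toNat := by
  have hSAa : SA ja ≤ n := hSA.le (by omega)
  have hSAb : SA jb ≤ n := hSA.le (by omega)
  have hAlen := length_drop_wordM (S := S) (n := n) hwa (by omega)
  have hBlen := length_drop_wordM (S := S) (n := n) hwb (by omega)
  set La := SA ja - a
  set Lb := SA jb - b
  refine List.lt_iff_exists.2 <|
    .inr ⟨min c (min La Lb), by omega, by omega, fun t ht => ?_, ?_⟩
  · rw [getElem_drop_wordM_natCast hSAa hwa hwa',
      getElem_drop_wordM_natCast hSAb hwb hwb', if_pos (by omega), if_pos (by omega),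
      heq t (by omega)]
  rw [getElem_drop_wordM_natCast hSAa hwa hwa',
    getElem_drop_wordM_natCast hSAb hwb hwb']
  by_cases hc : c < La ∧ c < Lb
  · rw [if_pos (by omega), if_pos (by omega), show min c (min La Lb) = c by omega]
    exact_mod_cast hlt
  rcases lt_trichotomy La Lb with hL | hL | hL
  · rw [if_neg (by omega), if_pos (by omega)]
    omega
  · have h := sfx_add_lt_sfx_add_of_mismatch (L := La) (by omega) hca hcb heq hlt
    rw [show a + La = SA ja by omega, show b + La = SA jb by omega] at h
    have := hSA.lt_of_sfx_lt (by omega) (by omega) h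
    rw [if_neg (by omega), if_neg (by omega)]
    omega
  · -- the position `a + Lb` would be a suffix-array entry of rank `< jb ≤ k` inside `W_ja`
    exfalso
    have h := sfx_add_lt_sfx_add_of_mismatch (L := Lb) (by omega) hca hcb heq hlt
    rw [show b + Lb = SA jb by omega] at h
    obtain ⟨r, hr, hra⟩ := hSA.exists_eq (a := a + Lb) (by omega)
    rw [← hra] at h
    have := hSA.lt_of_sfx_lt hr (by omega) h
    have := le_Omega (SA := SA) (show r ≤ k by omega) (show SA r < SA ja by omega)
    omega

end Words

/-- The paper's `word(a)`: the index `j` with `Ω(j) ≤ a ≤ PSA[j] - 1`, positions read through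
`posZ`. -/
noncomputable def word (SA : ℕ → ℕ) (n k a : ℕ) : ℕ :=
  Classical.epsilon fun j => j ≤ k ∧ Omega SA k j ≤ posZ n a ∧ posZ n a < SA j

/-- The paper's `position(a)`, the offset of `a` inside `W'_{word(a)}`. -/
noncomputable def position (SA : ℕ → ℕ) (n k a : ℕ) : ℕ :=
  (posZ n a - Omega SA k (word SA n k a)).toNat

noncomputable def partitionDA (SA : ℕ → ℕ) (n k i : ℕ) : ℕ :=
  if i ≤ k then i else word SA n k (SA (i - (k + 1)))

noncomputable def partitionSA (S SA : ℕ → ℕ) (n k i : ℕ) : ℕ :=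
  if i ≤ k then (wordM S n SA k i).length - 1 else position SA n k (SA (i - (k + 1)))

section Partition

variable {S SA : ℕ → ℕ} {n k : ℕ}

/-- `W_j` is the stretch of positions ending just before the smallest `PSA` entry beyond `a`;
`PSA[0] = SA[0] = n` guarantees there is one. -/
theorem exists_word (hS : Sentinel S n) (hSA : IsSuffixArray S n SA) {a : ℕ} (ha : a ≤ n) :
    ∃ j ≤ k, Omega SA k j ≤ posZ n a ∧ posZ n a < SA j := by
  set T := (Finset.range (k + 1)).filter fun t => posZ n a < SA t
  have h0 : 0 ∈ T := by
    simp only [T, Finset.mem_filter, Finset.mem_range, hSA.apply_zero hS]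
    exact ⟨by omega, posZ_lt ha⟩
  obtain ⟨j, hjT, hjmin⟩ := T.exists_min_image SA ⟨0, h0⟩
  simp only [T, Finset.mem_filter, Finset.mem_range] at hjT hjmin
  refine ⟨j, by omega, Omega_le (neg_one_le_posZ a) fun t ht hlt => ?_, hjT.2⟩
  by_contra! h
  exact absurd (hjmin t ⟨by omega, h⟩) (not_le.2 hlt)

theorem word_spec (hS : Sentinel S n) (hSA : IsSuffixArray S n SA) {a : ℕ} (ha : a ≤ n) :
    word SA n k a ≤ k ∧ Omega SA k (word SA n k a) ≤ posZ n a ∧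
      posZ n a < SA (word SA n k a) :=
  Classical.epsilon_spec (exists_word hS hSA ha)

theorem drop_position_lt_of_sfx_lt (hS : Sentinel S n) (hSA : IsSuffixArray S n SA)
    (hk : k < n) {a b : ℕ} (ha : a ≤ n) (hb : b ≤ n) (h : sfx S n a < sfx S n b) :
    (wordM S n SA k (word SA n k a)).drop (position SA n k a) <
      (wordM S n SA k (word SA n k b)).drop (position SA n k b) := by
  obtain ⟨hja, hwa, hwa'⟩ := word_spec (k := k) hS hSA ha
  obtain ⟨hjb, hwb, hwb'⟩ := word_spec (k := k) hS hSA hb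
  have hbn : b ≠ n := fun hbn => hS.not_sfx_lt_sfx_self ha (hbn ▸ h)
  rw [posZ_of_ne hbn] at hwb hwb'
  unfold position
  rw [posZ_of_ne hbn]
  by_cases han : a = n
  · subst a
    have hSAb : SA (word SA n k b) ≤ n := hSA.le (by omega)
    have hlen := length_drop_wordM (S := S) (n := n) hwb hwb'.le
    refine List.lt_iff_exists.2 <|
      .inr ⟨0, ?_, by omega, fun t ht => absurd ht t.not_lt_zero, ?_⟩
    · rw [length_drop_wordM hwa hwa'.le]
      omega
    rw [getElem_drop_wordM hwa hwa'.le, getElem_drop_wordM_natCast hSAb hwb (Nat.cast_lt.1 hwb'),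
      if_pos (by omega), if_pos (by omega)]
    simp only [posZ_self, Nat.cast_zero, add_zero, Sc_neg_one, Nat.cast_pos]
    exact hS.2 b (by omega)
  · rw [posZ_of_ne han] at hwa hwa' ⊢
    obtain ⟨c, hca, hcb, heq, hlt⟩ := hS.exists_mismatch_of_sfx_lt ha h
    exact drop_wordM_lt_of_mismatch hSA hk hja hjb hwa (Nat.cast_lt.1 hwa') hwb
      (Nat.cast_lt.1 hwb') hca hcb heq hlt

theorem drop_length_sub_one_wordM (j : ℕ) :
    (wordM S n SA k j).drop ((wordM S n SA k j).length - 1) = [(j : ℤ) - (k + 1)] := by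
  simp [wordM]

theorem marker_lt_drop_position (hS : Sentinel S n) (hSA : IsSuffixArray S n SA) {i a : ℕ}
    (hi : i ≤ k) (ha : a ≤ n) :
    [(i : ℤ) - (k + 1)] < (wordM S n SA k (word SA n k a)).drop (position SA n k a) := by
  obtain ⟨-, hwa, hwa'⟩ := word_spec (k := k) hS hSA ha
  have hlen := length_drop_wordM (S := S) (n := n) hwa hwa'.le
  refine List.lt_iff_exists.2 <| .inr ⟨0, by simp, by unfold position; omega,
    fun t ht => absurd ht t.not_lt_zero, ?_⟩
  simp only [position, getElem_drop_wordM hwa hwa'.le, List.getElem_cons_zero]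
  split_ifs
  · have := Sc_nonneg (S := S) (n := n) (posZ n a + (0 : ℕ))
    omega
  · omega

theorem partitionDA_lt_and_partitionSA_lt_length (hS : Sentinel S n)
    (hSA : IsSuffixArray S n SA) {i : ℕ} (hi : i < n + 1 + (k + 1)) :
    partitionDA SA n k i < k + 1 ∧
      partitionSA S SA n k i < (wordM S n SA k (partitionDA SA n k i)).length := by
  unfold partitionDA partitionSA
  split_ifs with hik
  · rw [length_wordM]
    omega
  · obtain ⟨hj, hwa, hwa'⟩ := word_spec (k := k) hS hSA (hSA.le (j := i - (k + 1)) (by omega))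
    rw [position, length_wordM]
    omega

theorem strictMonoOn_drop_partition (hS : Sentinel S n) (hSA : IsSuffixArray S n SA)
    (hk : k < n) :
    StrictMonoOn (fun i => (wordM S n SA k (partitionDA SA n k i)).drop (partitionSA S SA n k i))
      (Set.Iio (n + 1 + (k + 1))) := by
  intro i hi j hj hij
  simp only [Set.mem_Iio] at hi hj
  simp only [partitionDA, partitionSA]
  split_ifs with hik hjk hjk
  · rw [drop_length_sub_one_wordM, drop_length_sub_one_wordM]
    exact List.Lex.rel (by omega)
  · rw [drop_length_sub_one_wordM]
    exact marker_lt_drop_position hS hSA hik (hSA.le (by omega))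
  · omega
  · exact drop_position_lt_of_sfx_lt hS hSA hk (hSA.le (by omega)) (hSA.le (by omega))
      (hSA.2 _ _ (by omega) (by omega) (by omega))

end Partition

/-- the suffix array and document array of the collection
`W' = {W'_0, …, W'_k}` satisfy: for `0 ≤ i < l`, `SA(W)[i] = |W'_i| - 1` and
`DA(W)[i] = i`; for `l ≤ i < m`, `SA(W)[i] = position(SA(S)[i-l])` and
`DA(W)[i] = word(SA(S)[i-l])`, where `l = k+1` and `m = (n+1) + l`. -/
theorem msa_of_partition (S SA SAW DAW : ℕ → ℕ) (n k : ℕ) (hk : k < n)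
    (hS : Sentinel S n) (hSA : IsSuffixArray S n SA)
    (hMSA : IsMSA (wordM S n SA k) (k+1) (n+1+(k+1)) SAW DAW) :
    (∀ i ≤ k, SAW i = (wordM S n SA k i).length - 1 ∧ DAW i = i) ∧
    (∀ i : ℕ, k + 1 ≤ i → i < n+1+(k+1) →
      DAW i ≤ k ∧
      Omega SA k (DAW i) ≤ posZ n (SA (i - (k+1))) ∧
      posZ n (SA (i - (k+1))) ≤ (SA (DAW i) : ℤ) - 1 ∧
      (SAW i : ℤ) = posZ n (SA (i - (k+1))) - Omega SA k (DAW i)) := by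
  have hmsa {i : ℕ} (hi : i < n + 1 + (k + 1)) :
      DAW i = partitionDA SA n k i ∧ SAW i = partitionSA S SA n k i :=
    hMSA.eq_of_strictMonoOn (fun _ _ _ _ => drop_wordM_injective)
      (fun _ hi => partitionDA_lt_and_partitionSA_lt_length hS hSA hi)
      (strictMonoOn_drop_partition hS hSA hk) hi
  refine ⟨fun i hi => ?_, fun i hki hi => ?_⟩
  · obtain ⟨hD, hP⟩ := hmsa (i := i) (by omega)
    simp only [partitionDA, partitionSA, if_pos hi] at hD hP
    exact ⟨hP, hD⟩
  · obtain ⟨hD, hP⟩ := hmsa hi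
    simp only [partitionDA, partitionSA, if_neg (show ¬ i ≤ k by omega), position] at hD hP
    obtain ⟨hj, hwa, hwa'⟩ := word_spec (k := k) hS hSA (hSA.le (j := i - (k + 1)) (by omega))
    rw [hD, hP]
    exact ⟨hj, hwa, by omega, by omega⟩
end

section
/- LMS characterization: Let S be a string over alphabet {A, C, G, T} with appended sentinel $. Each position p > 0 such that either S[p] = S[p+1] = ... = S[p+d-1] = A for some d ≥ 1 with S[p+d] ∉ {$, A} and S[p-1] ≠ A, or such that S[p] = $, is a left-most S-type (LMS) position in the sense of SA-IS. -/
/-- Position `i` is S-type: either the sentinel position `n`, or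
`S[i..] < S[i+1..]`. -/
def SType (S : ℕ → ℕ) (n i : ℕ) : Prop :=
  i = n ∨ List.Lex (· < ·) (sfx S n i) (sfx S n (i+1))

/-- Position `i` is L-type: `S[i..] > S[i+1..]`. -/
def LType (S : ℕ → ℕ) (n i : ℕ) : Prop :=
  List.Lex (· < ·) (sfx S n (i+1)) (sfx S n i)

/-- `p` is a left-most S-type (LMS) position: `p > 0`, `p` is S-type and `p-1`
is L-type. -/
def IsLMS (S : ℕ → ℕ) (n p : ℕ) : Prop :=
  0 < p ∧ SType S n p ∧ LType S n (p - 1)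

lemma sfx_cons (S : ℕ → ℕ) (n i : ℕ) (h : i ≤ n) :
    sfx S n i = S i :: sfx S n (i+1) := by
  unfold sfx
  have h1 : n + 1 - i = (n + 1 - (i+1)) + 1 := by omega
  rw [h1, List.range_succ_eq_map, List.map_cons, List.map_map]
  simp only [Nat.add_zero]
  congr 1
  apply List.map_congr_left
  intro a _
  simp only [Function.comp]
  congr 1
  omega

lemma stype_of_lt (S : ℕ → ℕ) (n i : ℕ) (h : i < n) (hlt : S i < S (i+1)) :
    List.Lex (· < ·) (sfx S n i) (sfx S n (i+1)) := by
  rw [sfx_cons S n i (by omega), sfx_cons S n (i+1) (by omega)]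
  exact List.Lex.rel hlt

lemma stype_of_eq (S : ℕ → ℕ) (n i : ℕ) (h : i < n) (heq : S i = S (i+1))
    (hnext : List.Lex (· < ·) (sfx S n (i+1)) (sfx S n (i+2))) :
    List.Lex (· < ·) (sfx S n i) (sfx S n (i+1)) := by
  rw [sfx_cons S n (i+1) (by omega), show i+1+1 = i+2 by omega] at hnext
  rw [sfx_cons S n i (by omega), sfx_cons S n (i+1) (by omega), heq,
    show i+1+1 = i+2 by omega]
  exact List.Lex.cons hnext

/-- LMS characterization: over the DNA alphabet
`$ = 0 < A = 1 < C = 2 < G = 3 < T = 4`, every position `p > 0` that either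
starts a left-maximal run of `A`s followed by a letter in `{C, G, T}`, or
carries the sentinel `$`, is an LMS position. -/
theorem lms_characterization (S : ℕ → ℕ) (n : ℕ) (hsent : S n = 0)
    (halph : ∀ i < n, 1 ≤ S i ∧ S i ≤ 4)
    (p : ℕ) (hp : 0 < p) (hpn : p ≤ n)
    (hcase :
      (∃ d, 1 ≤ d ∧ p + d ≤ n ∧ (∀ t < d, S (p + t) = 1) ∧
        S (p + d) ≠ 0 ∧ S (p + d) ≠ 1 ∧ S (p - 1) ≠ 1) ∨
      S p = 0) :
    IsLMS S n p := by
  rcases hcase with ⟨d, hd1, hdn, hrun, hne0, hne1, hprev⟩ | hsp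
  · -- run of A's case
    have hpd : p + d < n := by
      rcases Nat.lt_or_ge (p + d) n with h | h
      · exact h
      · have : p + d = n := le_antisymm hdn h
        exact absurd (this ▸ hsent) hne0
    have hSpd : 2 ≤ S (p + d) := by
      have := halph (p + d) hpd
      omega
    -- S-type at every position of the run, by reverse induction
    have key : ∀ e, 1 ≤ e → e ≤ d →
        List.Lex (· < ·) (sfx S n (p + d - e)) (sfx S n (p + d - e + 1)) := by
      intro e
      induction e with
      | zero => intro h; omega
      | succ e ih =>
        intro _ hed
        rcases Nat.eq_zero_or_pos e with he | he
        · subst he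
          have h1 : p + d - 1 < n := by omega
          have h2 : p + d - 1 + 1 = p + d := by omega
          apply stype_of_lt S n _ h1
          rw [h2]
          have := hrun (d - 1) (by omega)
          have h3 : p + (d - 1) = p + d - 1 := by omega
          rw [h3] at this
          omega
        · have hi : p + d - (e+1) < n := by omega
          have hSi : S (p + d - (e+1)) = 1 := by
            have := hrun (d - (e+1)) (by omega)
            have h3 : p + (d - (e+1)) = p + d - (e+1) := by omega
            rwa [h3] at this
          have hSi1 : S (p + d - (e+1) + 1) = 1 := by
            have := hrun (d - e) (by omega)
            have h3 : p + (d - e) = p + d - (e+1) + 1 := by omega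
            rwa [h3] at this
          apply stype_of_eq S n _ hi (by rw [hSi, hSi1])
          have h4 : p + d - (e+1) + 1 = p + d - e := by omega
          have h5 : p + d - (e+1) + 2 = p + d - e + 1 := by omega
          rw [h4, h5]
          exact ih he (by omega)
    refine ⟨hp, Or.inr ?_, ?_⟩
    · have := key d hd1 le_rfl
      have h6 : p + d - d = p := by omega
      rwa [h6] at this
    · -- L-type at p-1 : S (p-1) ≥ 2 > 1 = S p
      unfold LType
      have hp1 : p - 1 < n := by omega
      have hSp : S p = 1 := by
        have := hrun 0 (by omega); simpa using this
      have hSp1 : 2 ≤ S (p - 1) := by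
        have := halph (p - 1) hp1
        omega
      rw [sfx_cons S n (p-1) (by omega)]
      have h7 : p - 1 + 1 = p := by omega
      rw [h7, sfx_cons S n p (by omega)]
      exact List.Lex.rel (by omega)
  · -- sentinel case : p = n
    have hpn' : p = n := by
      by_contra h
      have hplt : p < n := lt_of_le_of_ne hpn h
      have := halph p hplt
      omega
    subst hpn'
    refine ⟨hp, Or.inl rfl, ?_⟩
    unfold LType
    have h1 : p - 1 < p := by omega
    rw [sfx_cons S p (p-1) (by omega)]
    have h7 : p - 1 + 1 = p := by omega
    rw [h7]
    have hS1 : 1 ≤ S (p - 1) := (halph (p-1) h1).1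
    rw [sfx_cons S p p le_rfl, hsp]
    exact List.Lex.rel (by omega)
end
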